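/- arXiv:1806.05200 — 4 statements merged into one kernel-verified Lean document; each statement's English description precedes it below -/
import Mathlib

section
/- For n ≥ 3, the set G = { y_i y_j − xz : 1 ≤ i < j ≤ n } ∪ { xz(y_k − y_n) : 1 ≤ k ≤ n−1 } ∪ { xz(y_n² − xz) } is the reduced Gröbner basis of the join-meet ideal I of the diamond lattice D_{n+2} with respect to the reverse lexicographic order induced by x > y_1 > y_2 > ⋯ > y_n > z. -/
open MvPolynomial

noncomputable def xP (K : Type*) [Field K] (n : ℕ) : MvPolynomial (Fin (n + 2)) K := X 0
noncomputable def zP (K : Type*) [Field K] (n : ℕ) : MvPolynomial (Fin (n + 2)) K :=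
  X (Fin.last (n + 1))
noncomputable def yP (K : Type*) [Field K] (n : ℕ) (i : Fin n) : MvPolynomial (Fin (n + 2)) K :=
  X i.succ.castSucc
noncomputable def diamondIdeal (K : Type*) [Field K] (n : ℕ) :
    Ideal (MvPolynomial (Fin (n + 2)) K) :=
  Ideal.span {f | ∃ i j : Fin n, i < j ∧ f = yP K n i * yP K n j - xP K n * zP K n}
def mdeg {σ : Type*} (m : σ →₀ ℕ) : ℕ := m.sum fun _ e => e
def revlexLt {N : ℕ} (a b : Fin N →₀ ℕ) : Prop :=
  mdeg a < mdeg b ∨ (mdeg a = mdeg b ∧ ∃ i, b i < a i ∧ ∀ j, i < j → a j = b j)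
def IsLeadMon {N : ℕ} {K : Type*} [Field K] (f : MvPolynomial (Fin N) K) (m : Fin N →₀ ℕ) :
    Prop :=
  m ∈ f.support ∧ ∀ m' ∈ f.support, m' ≠ m → revlexLt m' m
noncomputable def initialIdeal {N : ℕ} (K : Type*) [Field K]
    (I : Ideal (MvPolynomial (Fin N) K)) : Ideal (MvPolynomial (Fin N) K) :=
  Ideal.span {p | ∃ f ∈ I, ∃ m, IsLeadMon f m ∧ p = monomial m (1 : K)}
def IsGroebnerBasis {N : ℕ} {K : Type*} [Field K] (G : Set (MvPolynomial (Fin N) K))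
    (I : Ideal (MvPolynomial (Fin N) K)) : Prop :=
  G ⊆ (I : Set (MvPolynomial (Fin N) K)) ∧
    initialIdeal K I = Ideal.span {p | ∃ g ∈ G, ∃ m, IsLeadMon g m ∧ p = monomial m (1 : K)}
def IsReducedGroebnerBasis {N : ℕ} {K : Type*} [Field K] (G : Set (MvPolynomial (Fin N) K))
    (I : Ideal (MvPolynomial (Fin N) K)) : Prop :=
  IsGroebnerBasis G I ∧
    (∀ g ∈ G, ∃ m, IsLeadMon g m ∧ coeff m g = 1) ∧
    (∀ g ∈ G, ∀ g' ∈ G, g ≠ g' → ∀ m', IsLeadMon g' m' → ∀ m ∈ g.support, ¬ m' ≤ m)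

/-!
Modulo `I` every product `y_i y_j` with `i ≠ j` equals `x z`, so a monomial divisible by a
leading monomial of `G` is congruent to `x^(a + d/2) z^(c + d/2) y_n^(d % 2)`, where `a`, `c` are
its `x`- and `z`-degrees and `d` its total `y`-degree. Sending every such monomial to this normal
form and fixing all other monomials gives a linear map that kills `I` (it identifies `u y_i y_j`
with `u x z`) and never raises a monomial in the revlex order. It therefore preserves the leading
coefficient of any polynomial whose leading monomial is not divisible by a leading monomial of
`G`, so no nonzero element of `I` has such a leading monomial: the leading monomials of `G`
generate the initial ideal. That `G` lies in `I` and is reduced are direct computations with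
binomials.
-/

section Revlex

variable {N : ℕ}

lemma mdeg_eq_degree {σ : Type*} (m : σ →₀ ℕ) : mdeg m = m.degree := rfl

lemma revlexLt_irrefl (a : Fin N →₀ ℕ) : ¬ revlexLt a a := by
  rintro (h | ⟨-, _, h, -⟩)
  · exact lt_irrefl _ h
  · exact lt_irrefl _ h

lemma revlexLt_trans {a b c : Fin N →₀ ℕ} (hab : revlexLt a b) (hbc : revlexLt b c) :
    revlexLt a c := by
  rcases hab with hab | ⟨hab, i, hi, hai⟩ <;> rcases hbc with hbc | ⟨hbc, j, hj, hbj⟩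
  · exact Or.inl (hab.trans hbc)
  · exact Or.inl (hbc ▸ hab)
  · exact Or.inl (hab ▸ hbc)
  refine Or.inr ⟨hab.trans hbc, ?_⟩
  rcases lt_trichotomy i j with h | rfl | h
  · exact ⟨j, hai j h ▸ hj, fun k hk => (hai k (h.trans hk)).trans (hbj k hk)⟩
  · exact ⟨i, hj.trans hi, fun k hk => (hai k hk).trans (hbj k hk)⟩
  · exact ⟨i, hbj i h ▸ hi, fun k hk => (hai k hk).trans (hbj k (h.trans hk))⟩

lemma revlexLt_asymm {a b : Fin N →₀ ℕ} (hab : revlexLt a b) : ¬ revlexLt b a :=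
  fun hba => revlexLt_irrefl a (revlexLt_trans hab hba)

end Revlex

section LeadingMonomial

variable {N : ℕ} {K : Type*} [Field K]

lemma IsLeadMon.unique {f : MvPolynomial (Fin N) K} {m m' : Fin N →₀ ℕ} (h : IsLeadMon f m)
    (h' : IsLeadMon f m') : m = m' := by
  by_contra hne
  exact revlexLt_asymm (h'.2 m h.1 hne) (h.2 m' h'.1 (Ne.symm hne))

lemma mem_support_monomial_sub_monomial {A B : Fin N →₀ ℕ} (h : revlexLt B A)
    {m : Fin N →₀ ℕ} : m ∈ (monomial A (1 : K) - monomial B 1).support ↔ m = A ∨ m = B := by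
  have hAB : B ≠ A := fun hAB => revlexLt_irrefl A (hAB ▸ h)
  rw [mem_support_iff, coeff_sub, coeff_monomial, coeff_monomial]
  by_cases hA : A = m <;> by_cases hB : B = m <;> simp [hA, hB, eq_comm]
  exact hAB (hB.trans hA.symm)

lemma isLeadMon_monomial_sub_monomial {A B : Fin N →₀ ℕ} (h : revlexLt B A) :
    IsLeadMon (monomial A (1 : K) - monomial B 1) A := by
  refine ⟨(mem_support_monomial_sub_monomial h).2 (Or.inl rfl), fun m hm hne => ?_⟩
  rcases (mem_support_monomial_sub_monomial h).1 hm with rfl | rfl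
  · exact absurd rfl hne
  · exact h

lemma exists_isLeadMon_coeff_eq_one {A B : Fin N →₀ ℕ} (h : revlexLt B A) :
    ∃ m, IsLeadMon (monomial A (1 : K) - monomial B 1) m ∧
      coeff m (monomial A (1 : K) - monomial B 1) = 1 := by
  have hAB : B ≠ A := fun hAB => revlexLt_irrefl A (hAB ▸ h)
  exact ⟨A, isLeadMon_monomial_sub_monomial h, by simp [coeff_monomial, hAB]⟩

lemma monomial_mem_span_leadMons {G : Set (MvPolynomial (Fin N) K)} {g : MvPolynomial (Fin N) K}
    (hg : g ∈ G) {e m : Fin N →₀ ℕ} (he : IsLeadMon g e) (hle : e ≤ m) :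
    monomial m (1 : K) ∈ Ideal.span {p | ∃ g ∈ G, ∃ m, IsLeadMon g m ∧ p = monomial m (1 : K)} := by
  have hm : monomial m (1 : K) = monomial (m - e) 1 * monomial e 1 := by
    rw [monomial_mul, one_mul, tsub_add_cancel_of_le hle]
  rw [hm]
  exact Ideal.mul_mem_left _ _ (Ideal.subset_span ⟨g, hg, e, he, rfl⟩)

lemma isGroebnerBasis_of_forall_isLeadMon {G : Set (MvPolynomial (Fin N) K)}
    {I : Ideal (MvPolynomial (Fin N) K)} (hGI : G ⊆ I)
    (h : ∀ f ∈ I, ∀ m, IsLeadMon f m → ∃ g ∈ G, ∃ e, IsLeadMon g e ∧ e ≤ m) :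
    IsGroebnerBasis G I := by
  refine ⟨hGI, le_antisymm (Ideal.span_le.2 ?_) (Ideal.span_le.2 ?_)⟩
  · rintro _ ⟨f, hf, m, hm, rfl⟩
    obtain ⟨g, hg, e, he, hle⟩ := h f hf m hm
    exact monomial_mem_span_leadMons hg he hle
  · rintro _ ⟨g, hg, m, hm, rfl⟩
    exact Ideal.subset_span ⟨g, hGI hg, m, hm, rfl⟩

end LeadingMonomial

section MapDomain

variable {σ R : Type*} [CommRing R]

lemma mapDomainLinearMap_monomial (φ : (σ →₀ ℕ) → (σ →₀ ℕ)) (u : σ →₀ ℕ) (c : R) :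
    AddMonoidAlgebra.mapDomainLinearMap R R φ (monomial u c) = monomial (φ u) c := by
  rw [← single_eq_monomial, ← single_eq_monomial]
  exact AddMonoidAlgebra.mapDomainLinearMap_single φ c u

lemma mapDomainLinearMap_eq_zero_of_mem_span {φ : (σ →₀ ℕ) → (σ →₀ ℕ)}
    {S : Set (MvPolynomial σ R)}
    (hS : ∀ s ∈ S, ∃ A B, s = monomial A 1 - monomial B 1 ∧ ∀ u, φ (u + A) = φ (u + B))
    {f : MvPolynomial σ R} (hf : f ∈ Ideal.span S) :
    AddMonoidAlgebra.mapDomainLinearMap R R φ f = 0 := by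
  suffices h : ∀ r : MvPolynomial σ R, AddMonoidAlgebra.mapDomainLinearMap R R φ (r * f) = 0 by
    simpa using h 1
  induction hf using Submodule.span_induction with
  | mem s hs =>
    obtain ⟨A, B, rfl, hAB⟩ := hS s hs
    intro r
    induction r using MvPolynomial.induction_on' with
    | monomial u c =>
      rw [mul_sub, monomial_mul, monomial_mul, map_sub, mapDomainLinearMap_monomial,
        mapDomainLinearMap_monomial, hAB, sub_self]
    | add p q hp hq => rw [add_mul, map_add, hp, hq, add_zero]
  | zero => simp
  | add a b _ _ ha hb => intro r; rw [mul_add, map_add, ha, hb, add_zero]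
  | smul a x _ hx => intro r; rw [smul_eq_mul, ← mul_assoc]; exact hx (r * a)

end MapDomain

section ReductionMap

variable {N : ℕ} {K : Type*} [Field K]

lemma coeff_mapDomainLinearMap_of_isLeadMon {φ : (Fin N →₀ ℕ) → (Fin N →₀ ℕ)}
    (hφ : ∀ u, φ u = u ∨ revlexLt (φ u) u) {f : MvPolynomial (Fin N) K} {L : Fin N →₀ ℕ}
    (hL : IsLeadMon f L) (hφL : φ L = L) :
    coeff L (AddMonoidAlgebra.mapDomainLinearMap K K φ f) = coeff L f := by
  classical
  change Finsupp.mapDomain φ (AddMonoidAlgebra.coeff f) L = _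
  conv_lhs => rw [← hφL]
  rw [Finsupp.mapDomain_apply_eq_sum, Finset.sum_eq_single L]
  · rfl
  · intro u hu hne
    obtain ⟨hu, hφu⟩ := Finset.mem_filter.1 hu
    rw [hφL] at hφu
    rcases hφ u with h | h
    · exact absurd (h.symm.trans hφu) hne
    · exact absurd (hL.2 u hu hne) (revlexLt_asymm (hφu ▸ h))
  · intro h
    exact (h (Finset.mem_filter.2 ⟨hL.1, rfl⟩)).elim

lemma apply_ne_of_isLeadMon_of_mem_span {φ : (Fin N →₀ ℕ) → (Fin N →₀ ℕ)}
    (hφ : ∀ u, φ u = u ∨ revlexLt (φ u) u) {S : Set (MvPolynomial (Fin N) K)}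
    (hS : ∀ s ∈ S, ∃ A B, s = monomial A 1 - monomial B 1 ∧ ∀ u, φ (u + A) = φ (u + B))
    {f : MvPolynomial (Fin N) K} (hf : f ∈ Ideal.span S) {L : Fin N →₀ ℕ}
    (hL : IsLeadMon f L) : φ L ≠ L := by
  intro hφL
  have h := coeff_mapDomainLinearMap_of_isLeadMon hφ hL hφL
  rw [mapDomainLinearMap_eq_zero_of_mem_span hS hf, coeff_zero] at h
  exact mem_support_iff.1 hL.1 h.symm

end ReductionMap

namespace Diamond

section Exponents

variable {n : ℕ}

def yIdx (i : Fin n) : Fin (n + 2) := i.succ.castSucc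

@[simp] lemma yIdx_ne_zero (i : Fin n) : yIdx i ≠ 0 := by simp [yIdx]

@[simp] lemma yIdx_ne_last (i : Fin n) : yIdx i ≠ Fin.last (n + 1) := Fin.castSucc_ne_last _

@[simp] lemma yIdx_inj {i j : Fin n} : yIdx i = yIdx j ↔ i = j := by simp [yIdx]

@[simp] lemma yIdx_lt_yIdx {i j : Fin n} : yIdx i < yIdx j ↔ i < j := by simp [yIdx]

lemma index_cases (t : Fin (n + 2)) : t = 0 ∨ t = Fin.last (n + 1) ∨ ∃ i, t = yIdx i := by
  induction t using Fin.lastCases with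
  | last => exact Or.inr (Or.inl rfl)
  | cast t =>
    induction t using Fin.cases with
    | zero => exact Or.inl rfl
    | succ i => exact Or.inr (Or.inr ⟨i, rfl⟩)

def ydeg (m : Fin (n + 2) →₀ ℕ) : ℕ := ∑ i : Fin n, m (yIdx i)

lemma ydeg_add (a b : Fin (n + 2) →₀ ℕ) : ydeg (a + b) = ydeg a + ydeg b := by
  simp [ydeg, Finset.sum_add_distrib]

@[simp] lemma ydeg_single_zero (e : ℕ) : ydeg (Finsupp.single (0 : Fin (n + 2)) e) = 0 := by
  simp [ydeg]

@[simp] lemma ydeg_single_last (e : ℕ) : ydeg (Finsupp.single (Fin.last (n + 1)) e) = 0 := by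
  simp [ydeg]

@[simp] lemma ydeg_single_yIdx (i : Fin n) (e : ℕ) : ydeg (Finsupp.single (yIdx i) e) = e := by
  simp [ydeg, Finsupp.single_apply]

lemma apply_yIdx_le_ydeg (m : Fin (n + 2) →₀ ℕ) (i : Fin n) : m (yIdx i) ≤ ydeg m :=
  Finset.single_le_sum (f := fun i => m (yIdx i)) (fun _ _ => Nat.zero_le _) (Finset.mem_univ i)

lemma add_apply_yIdx_le_ydeg (m : Fin (n + 2) →₀ ℕ) {i j : Fin n} (hij : i ≠ j) :
    m (yIdx i) + m (yIdx j) ≤ ydeg m := by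
  rw [← Finset.sum_pair (f := fun t => m (yIdx t)) hij]
  exact Finset.sum_le_sum_of_subset (Finset.subset_univ _)

lemma degree_eq (m : Fin (n + 2) →₀ ℕ) : m.degree = m 0 + ydeg m + m (Fin.last (n + 1)) := by
  rw [Finsupp.degree_eq_sum, Fin.sum_univ_castSucc, Fin.sum_univ_succ]
  rfl

noncomputable def xzExp : Fin (n + 2) →₀ ℕ :=
  Finsupp.single 0 1 + Finsupp.single (Fin.last (n + 1)) 1

noncomputable def yyExp (i j : Fin n) : Fin (n + 2) →₀ ℕ :=
  Finsupp.single (yIdx i) 1 + Finsupp.single (yIdx j) 1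

lemma revlexLt_xzExp_yyExp (i j : Fin n) : revlexLt xzExp (yyExp i j) := by
  refine Or.inr ⟨?_, Fin.last (n + 1), ?_, fun t ht => absurd ht (not_lt_of_ge (Fin.le_last t))⟩
  · simp [mdeg_eq_degree, xzExp, yyExp]
  · simp [xzExp, yyExp]

lemma revlexLt_xzExp_add_single {k l : Fin n} (hkl : k < l) :
    revlexLt (xzExp + Finsupp.single (yIdx l) 1) (xzExp + Finsupp.single (yIdx k) 1) := by
  refine Or.inr ⟨by simp [mdeg_eq_degree], yIdx l, ?_, fun t ht => ?_⟩
  · simp [xzExp, hkl.ne]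
  · have hk : yIdx k ≠ t := ((yIdx_lt_yIdx.2 hkl).trans ht).ne
    simp [hk, ht.ne]

lemma revlexLt_xzExp_add_xzExp (k : Fin n) :
    revlexLt (xzExp + xzExp) (xzExp + Finsupp.single (yIdx k) 2) := by
  refine Or.inr ⟨?_, Fin.last (n + 1), ?_, fun t ht => absurd ht (not_lt_of_ge (Fin.le_last t))⟩
  · simp [mdeg_eq_degree, xzExp]
  · simp [xzExp]

end Exponents

section Binomials

variable (K : Type*) [Field K] {n : ℕ}

lemma yP_mul_yP_sub_eq (i j : Fin n) :
    yP K n i * yP K n j - xP K n * zP K n = monomial (yyExp i j) 1 - monomial xzExp 1 := by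
  simp only [yP, xP, zP, X, monomial_mul, mul_one, yyExp, xzExp, yIdx]

lemma xP_mul_zP_mul_yP_sub_eq (k l : Fin n) :
    xP K n * zP K n * (yP K n k - yP K n l) =
      monomial (xzExp + Finsupp.single (yIdx k) 1) 1 -
        monomial (xzExp + Finsupp.single (yIdx l) 1) 1 := by
  simp only [yP, xP, zP, X, monomial_mul, mul_one, mul_sub, xzExp, yIdx]

lemma xP_mul_zP_mul_yP_sq_sub_eq (k : Fin n) :
    xP K n * zP K n * (yP K n k ^ 2 - xP K n * zP K n) =
      monomial (xzExp + Finsupp.single (yIdx k) 2) 1 - monomial (xzExp + xzExp) 1 := by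
  simp only [yP, xP, zP, X, monomial_pow, one_pow, Finsupp.smul_single, smul_eq_mul, monomial_mul,
    mul_one, mul_sub, xzExp, yIdx]

lemma isLeadMon_yP_mul_yP_sub (i j : Fin n) :
    IsLeadMon (yP K n i * yP K n j - xP K n * zP K n) (yyExp i j) := by
  rw [yP_mul_yP_sub_eq]
  exact isLeadMon_monomial_sub_monomial (revlexLt_xzExp_yyExp i j)

lemma isLeadMon_xP_mul_zP_mul_yP_sub {k l : Fin n} (hkl : k < l) :
    IsLeadMon (xP K n * zP K n * (yP K n k - yP K n l)) (xzExp + Finsupp.single (yIdx k) 1) := by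
  rw [xP_mul_zP_mul_yP_sub_eq]
  exact isLeadMon_monomial_sub_monomial (revlexLt_xzExp_add_single hkl)

lemma isLeadMon_xP_mul_zP_mul_yP_sq_sub (k : Fin n) :
    IsLeadMon (xP K n * zP K n * (yP K n k ^ 2 - xP K n * zP K n))
      (xzExp + Finsupp.single (yIdx k) 2) := by
  rw [xP_mul_zP_mul_yP_sq_sub_eq]
  exact isLeadMon_monomial_sub_monomial (revlexLt_xzExp_add_xzExp k)

lemma mem_support_yP_mul_yP_sub {i j : Fin n} {m : Fin (n + 2) →₀ ℕ} :
    m ∈ (yP K n i * yP K n j - xP K n * zP K n).support ↔ m = yyExp i j ∨ m = xzExp := by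
  rw [yP_mul_yP_sub_eq, mem_support_monomial_sub_monomial (revlexLt_xzExp_yyExp i j)]

lemma mem_support_xP_mul_zP_mul_yP_sub {k l : Fin n} (hkl : k < l) {m : Fin (n + 2) →₀ ℕ} :
    m ∈ (xP K n * zP K n * (yP K n k - yP K n l)).support ↔
      m = xzExp + Finsupp.single (yIdx k) 1 ∨ m = xzExp + Finsupp.single (yIdx l) 1 := by
  rw [xP_mul_zP_mul_yP_sub_eq, mem_support_monomial_sub_monomial (revlexLt_xzExp_add_single hkl)]

lemma mem_support_xP_mul_zP_mul_yP_sq_sub {k : Fin n} {m : Fin (n + 2) →₀ ℕ} :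
    m ∈ (xP K n * zP K n * (yP K n k ^ 2 - xP K n * zP K n)).support ↔
      m = xzExp + Finsupp.single (yIdx k) 2 ∨ m = xzExp + xzExp := by
  rw [xP_mul_zP_mul_yP_sq_sub_eq, mem_support_monomial_sub_monomial (revlexLt_xzExp_add_xzExp k)]

lemma yP_mul_yP_sub_mem {i j : Fin n} (hij : i ≠ j) :
    yP K n i * yP K n j - xP K n * zP K n ∈ diamondIdeal K n := by
  rcases hij.lt_or_gt with h | h
  · exact Ideal.subset_span ⟨i, j, h, rfl⟩
  · exact Ideal.subset_span ⟨j, i, h, by ring⟩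

lemma xP_mul_zP_mul_yP_sub_mem {k l t : Fin n} (htk : t ≠ k) (htl : t ≠ l) :
    xP K n * zP K n * (yP K n k - yP K n l) ∈ diamondIdeal K n := by
  have h : xP K n * zP K n * (yP K n k - yP K n l) =
      yP K n l * (yP K n t * yP K n k - xP K n * zP K n) -
        yP K n k * (yP K n t * yP K n l - xP K n * zP K n) := by ring
  rw [h]
  exact sub_mem (Ideal.mul_mem_left _ _ (yP_mul_yP_sub_mem K htk))
    (Ideal.mul_mem_left _ _ (yP_mul_yP_sub_mem K htl))

lemma xP_mul_zP_mul_yP_sq_sub_mem {k l : Fin n} (hkl : k ≠ l)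
    (h : xP K n * zP K n * (yP K n k - yP K n l) ∈ diamondIdeal K n) :
    xP K n * zP K n * (yP K n l ^ 2 - xP K n * zP K n) ∈ diamondIdeal K n := by
  have e : xP K n * zP K n * (yP K n l ^ 2 - xP K n * zP K n) =
      xP K n * zP K n * (yP K n k * yP K n l - xP K n * zP K n) -
        yP K n l * (xP K n * zP K n * (yP K n k - yP K n l)) := by ring
  rw [e]
  exact sub_mem (Ideal.mul_mem_left _ _ (yP_mul_yP_sub_mem K hkl)) (Ideal.mul_mem_left _ _ h)

end Binomials

section NormalForm

variable {n : ℕ} [NeZero n]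

def yLast : Fin n := ⟨n - 1, Nat.sub_one_lt (NeZero.ne n)⟩

lemma le_yLast (k : Fin n) : k ≤ yLast := by
  rw [Fin.le_def]
  exact Nat.le_sub_one_of_lt k.isLt

-- Divisibility by one of the leading monomials `y_i y_j`, `x z y_k`, `x z y_n²` of the basis.
def IsNonstandard (m : Fin (n + 2) →₀ ℕ) : Prop :=
  (∃ i j : Fin n, i < j ∧ 1 ≤ m (yIdx i) ∧ 1 ≤ m (yIdx j)) ∨
    (1 ≤ m 0 ∧ 1 ≤ m (Fin.last (n + 1)) ∧ ∃ k, k < yLast ∧ 1 ≤ m (yIdx k)) ∨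
    (1 ≤ m 0 ∧ 1 ≤ m (Fin.last (n + 1)) ∧ 2 ≤ m (yIdx yLast))

noncomputable def normalForm (m : Fin (n + 2) →₀ ℕ) : Fin (n + 2) →₀ ℕ :=
  Finsupp.single 0 (m 0 + ydeg m / 2) +
    Finsupp.single (Fin.last (n + 1)) (m (Fin.last (n + 1)) + ydeg m / 2) +
    Finsupp.single (yIdx yLast) (ydeg m % 2)

@[simp] lemma normalForm_apply_zero (m : Fin (n + 2) →₀ ℕ) :
    normalForm m 0 = m 0 + ydeg m / 2 := by
  simp [normalForm]

@[simp] lemma normalForm_apply_last (m : Fin (n + 2) →₀ ℕ) :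
    normalForm m (Fin.last (n + 1)) = m (Fin.last (n + 1)) + ydeg m / 2 := by
  simp [normalForm]

lemma normalForm_apply_yIdx (m : Fin (n + 2) →₀ ℕ) (i : Fin n) :
    normalForm m (yIdx i) = if i = yLast then ydeg m % 2 else 0 := by
  simp [normalForm, Finsupp.single_apply, eq_comm]

lemma ydeg_normalForm (m : Fin (n + 2) →₀ ℕ) : ydeg (normalForm m) = ydeg m % 2 := by
  simp [normalForm, ydeg_add]

lemma degree_normalForm (m : Fin (n + 2) →₀ ℕ) : (normalForm m).degree = m.degree := by
  rw [degree_eq, degree_eq m, normalForm_apply_zero, normalForm_apply_last, ydeg_normalForm]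
  omega

lemma normalForm_add_yyExp (u : Fin (n + 2) →₀ ℕ) (i j : Fin n) :
    normalForm (u + yyExp i j) = normalForm (u + xzExp) := by
  have hy : ydeg (u + yyExp i j) = ydeg (u + xzExp : Fin (n + 2) →₀ ℕ) + 2 := by
    simp [ydeg_add, yyExp, xzExp]
  have h0 : (u + xzExp : Fin (n + 2) →₀ ℕ) 0 = (u + yyExp i j) 0 + 1 := by simp [yyExp, xzExp]
  have hl : (u + xzExp : Fin (n + 2) →₀ ℕ) (Fin.last (n + 1)) =
      (u + yyExp i j) (Fin.last (n + 1)) + 1 := by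
    simp [yyExp, xzExp]
  have half : ∀ a d : ℕ, a + (d + 2) / 2 = a + 1 + d / 2 := by omega
  rw [normalForm, normalForm, hy, h0, hl, half, half, Nat.add_mod_right]

lemma normalForm_eq_self {m : Fin (n + 2) →₀ ℕ} (hy : ∀ i ≠ yLast, m (yIdx i) = 0)
    (hyLast : m (yIdx yLast) ≤ 1) : normalForm m = m := by
  have hdeg : ydeg m = m (yIdx yLast) := by
    rw [ydeg, Finset.sum_eq_single yLast (fun i _ hi => hy i hi) (by simp)]
  ext t
  rcases index_cases t with rfl | rfl | ⟨i, rfl⟩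
  · simp only [normalForm_apply_zero]; omega
  · simp only [normalForm_apply_last]; omega
  · rw [normalForm_apply_yIdx]
    split_ifs with hi
    · subst hi; omega
    · exact (hy i hi).symm

lemma eq_last_of_yIdx_yLast_lt {t : Fin (n + 2)} (ht : yIdx (yLast : Fin n) < t) :
    t = Fin.last (n + 1) := by
  rcases index_cases t with rfl | rfl | ⟨i, rfl⟩
  · exact absurd ht (Fin.not_lt_zero _)
  · rfl
  · exact absurd (yIdx_lt_yIdx.1 ht) (not_lt_of_ge (le_yLast i))

lemma revlexLt_normalForm {m : Fin (n + 2) →₀ ℕ} (h : IsNonstandard m) :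
    revlexLt (normalForm m) m := by
  refine Or.inr ⟨by rw [mdeg_eq_degree, mdeg_eq_degree, degree_normalForm], ?_⟩
  by_cases hd : 2 ≤ ydeg m
  · refine ⟨Fin.last (n + 1), ?_, fun t ht => absurd ht (not_lt_of_ge (Fin.le_last t))⟩
    rw [normalForm_apply_last]
    omega
  -- of `y`-degree at most one, `m` can only be divisible by some `x z y_k` with `k < n`
  obtain ⟨k, hk, hmk⟩ : ∃ k, k < yLast ∧ 1 ≤ m (yIdx k) := by
    rcases h with ⟨i, j, hij, hi, hj⟩ | ⟨-, -, hk⟩ | ⟨-, -, h2⟩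
    · have := add_apply_yIdx_le_ydeg m hij.ne
      omega
    · exact hk
    · have := apply_yIdx_le_ydeg m yLast
      omega
  have hLast : m (yIdx yLast) = 0 := by
    have := add_apply_yIdx_le_ydeg m hk.ne
    omega
  refine ⟨yIdx yLast, ?_, fun t ht => ?_⟩
  · rw [normalForm_apply_yIdx, if_pos rfl, hLast]
    have := apply_yIdx_le_ydeg m k
    omega
  · rw [eq_last_of_yIdx_yLast_lt ht, normalForm_apply_last]
    omega

open Classical in
noncomputable def reduce (m : Fin (n + 2) →₀ ℕ) : Fin (n + 2) →₀ ℕ :=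
  if IsNonstandard m then normalForm m else m

lemma reduce_eq_or_revlexLt (m : Fin (n + 2) →₀ ℕ) : reduce m = m ∨ revlexLt (reduce m) m := by
  unfold reduce
  split_ifs with h
  · exact Or.inr (revlexLt_normalForm h)
  · exact Or.inl rfl

lemma reduce_add_yyExp (u : Fin (n + 2) →₀ ℕ) {i j : Fin n} (hij : i < j) :
    reduce (u + yyExp i j) = reduce (u + xzExp) := by
  have hyy : IsNonstandard (u + yyExp i j) := Or.inl ⟨i, j, hij, by simp [yyExp]; omega,
    by simp [yyExp]; omega⟩
  rw [reduce, if_pos hyy, normalForm_add_yyExp, reduce]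
  split_ifs with hxz
  · rfl
  -- `u x z` is standard, so the only `y`-factor of `u` is at most one `y_n`
  simp only [IsNonstandard, not_or, not_and, not_exists, not_le] at hxz
  obtain ⟨-, hk, hLast⟩ := hxz
  refine normalForm_eq_self (fun k hk' => ?_) ?_
  · have := hk (by simp [xzExp]) (by simp [xzExp]) k ((le_yLast k).lt_of_ne hk')
    omega
  · have := hLast (by simp [xzExp]) (by simp [xzExp])
    omega

end NormalForm

section Basis

variable (K : Type*) [Field K] (n : ℕ) [NeZero n]

noncomputable def diamondBasis : Set (MvPolynomial (Fin (n + 2)) K) :=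
  {f | ∃ i j : Fin n, i < j ∧ f = yP K n i * yP K n j - xP K n * zP K n} ∪
    {f | ∃ k : Fin n, k < yLast ∧ f = xP K n * zP K n * (yP K n k - yP K n yLast)} ∪
    {xP K n * zP K n * (yP K n yLast ^ 2 - xP K n * zP K n)}

lemma diamondBasis_subset (hn : 2 < n) : diamondBasis K n ⊆ diamondIdeal K n := by
  have hxz : ∀ k : Fin n, xP K n * zP K n * (yP K n k - yP K n yLast) ∈ diamondIdeal K n := by
    intro k
    obtain ⟨t, htk, htl⟩ := Fin.exists_ne_and_ne_of_two_lt k yLast hn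
    exact xP_mul_zP_mul_yP_sub_mem K htk htl
  rintro g ((⟨i, j, hij, rfl⟩ | ⟨k, -, rfl⟩) | rfl)
  · exact Ideal.subset_span ⟨i, j, hij, rfl⟩
  · exact hxz k
  · obtain ⟨k, hk, -⟩ := Fin.exists_ne_and_ne_of_two_lt (yLast : Fin n) yLast hn
    exact xP_mul_zP_mul_yP_sq_sub_mem K hk (hxz k)

variable {K n}

lemma isNonstandard_of_isLeadMon {f : MvPolynomial (Fin (n + 2)) K} (hf : f ∈ diamondIdeal K n)
    {L : Fin (n + 2) →₀ ℕ} (hL : IsLeadMon f L) : IsNonstandard L := by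
  by_contra h
  refine apply_ne_of_isLeadMon_of_mem_span reduce_eq_or_revlexLt ?_ hf hL (if_neg h)
  rintro _ ⟨i, j, hij, rfl⟩
  exact ⟨_, _, yP_mul_yP_sub_eq K i j, fun u => reduce_add_yyExp u hij⟩

lemma exists_isLeadMon_le_of_isNonstandard {m : Fin (n + 2) →₀ ℕ} (h : IsNonstandard m) :
    ∃ g ∈ diamondBasis K n, ∃ e, IsLeadMon g e ∧ e ≤ m := by
  rcases h with ⟨i, j, hij, hi, hj⟩ | ⟨h0, hl, k, hk, hky⟩ | ⟨h0, hl, hy⟩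
  · refine ⟨_, Or.inl (Or.inl ⟨i, j, hij, rfl⟩), _, isLeadMon_yP_mul_yP_sub K i j, fun t => ?_⟩
    rcases index_cases t with rfl | rfl | ⟨s, rfl⟩ <;> simp [yyExp, Finsupp.single_apply]
    split_ifs <;> subst_vars <;> omega
  · refine ⟨_, Or.inl (Or.inr ⟨k, hk, rfl⟩), _, isLeadMon_xP_mul_zP_mul_yP_sub K hk, fun t => ?_⟩
    rcases index_cases t with rfl | rfl | ⟨s, rfl⟩ <;> simp [xzExp, Finsupp.single_apply, h0, hl]
    split_ifs <;> subst_vars <;> omega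
  · refine ⟨_, Or.inr rfl, _, isLeadMon_xP_mul_zP_mul_yP_sq_sub K yLast, fun t => ?_⟩
    rcases index_cases t with rfl | rfl | ⟨s, rfl⟩ <;> simp [xzExp, Finsupp.single_apply, h0, hl]
    split_ifs <;> subst_vars <;> omega

lemma isGroebnerBasis_diamondBasis (hn : 2 < n) :
    IsGroebnerBasis (diamondBasis K n) (diamondIdeal K n) :=
  isGroebnerBasis_of_forall_isLeadMon (diamondBasis_subset K n hn) fun _ hf _ hm =>
    exists_isLeadMon_le_of_isNonstandard (isNonstandard_of_isLeadMon hf hm)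

lemma diamondBasis_monic : ∀ g ∈ diamondBasis K n, ∃ m, IsLeadMon g m ∧ coeff m g = 1 := by
  rintro g ((⟨i, j, -, rfl⟩ | ⟨k, hk, rfl⟩) | rfl)
  · rw [yP_mul_yP_sub_eq]
    exact exists_isLeadMon_coeff_eq_one (revlexLt_xzExp_yyExp i j)
  · rw [xP_mul_zP_mul_yP_sub_eq]
    exact exists_isLeadMon_coeff_eq_one (revlexLt_xzExp_add_single hk)
  · rw [xP_mul_zP_mul_yP_sq_sub_eq]
    exact exists_isLeadMon_coeff_eq_one (revlexLt_xzExp_add_xzExp yLast)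

lemma not_yyExp_le_of_mem_support {i' j' : Fin n} (hij' : i' < j')
    {g : MvPolynomial (Fin (n + 2)) K} (hg : g ∈ diamondBasis K n)
    (hne : g ≠ yP K n i' * yP K n j' - xP K n * zP K n)
    {m : Fin (n + 2) →₀ ℕ} (hm : m ∈ g.support) : ¬ yyExp i' j' ≤ m := by
  intro hle
  have hi := hle (yIdx i')
  have hj := hle (yIdx j')
  rcases hg with (⟨i, j, hij, rfl⟩ | ⟨k, hk, rfl⟩) | rfl
  · rcases (mem_support_yP_mul_yP_sub K).1 hm with rfl | rfl <;>
      simp [xzExp, yyExp, Finsupp.single_apply, hij'.ne, hij'.ne'] at hi hj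
    split_ifs at hi hj <;> subst_vars <;> simp_all [lt_asymm]
  · rcases (mem_support_xP_mul_zP_mul_yP_sub K hk).1 hm with rfl | rfl <;>
      simp [xzExp, yyExp, Finsupp.single_apply, hij'.ne, hij'.ne'] at hi hj
    all_goals split_ifs at hi hj <;> subst_vars <;> simp_all
  · rcases (mem_support_xP_mul_zP_mul_yP_sq_sub K).1 hm with rfl | rfl <;>
      simp [xzExp, yyExp, Finsupp.single_apply, hij'.ne, hij'.ne'] at hi hj
    split_ifs at hi hj <;> subst_vars <;> simp_all

lemma not_xzExp_add_single_le_of_mem_support {k' : Fin n} (hk' : k' < yLast)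
    {g : MvPolynomial (Fin (n + 2)) K} (hg : g ∈ diamondBasis K n)
    (hne : g ≠ xP K n * zP K n * (yP K n k' - yP K n yLast))
    {m : Fin (n + 2) →₀ ℕ} (hm : m ∈ g.support) : ¬ xzExp + Finsupp.single (yIdx k') 1 ≤ m := by
  intro hle
  have h0 := hle 0
  have hy := hle (yIdx k')
  rcases hg with (⟨i, j, hij, rfl⟩ | ⟨k, hk, rfl⟩) | rfl
  · rcases (mem_support_yP_mul_yP_sub K).1 hm with rfl | rfl <;> simp [xzExp, yyExp] at h0 hy
  · rcases (mem_support_xP_mul_zP_mul_yP_sub K hk).1 hm with rfl | rfl <;>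
      simp [xzExp, Finsupp.single_apply] at h0 hy
    all_goals split_ifs at hy <;> subst_vars <;> simp_all
  · rcases (mem_support_xP_mul_zP_mul_yP_sq_sub K).1 hm with rfl | rfl <;>
      simp [xzExp, Finsupp.single_apply] at h0 hy
    all_goals split_ifs at hy <;> subst_vars <;> simp_all

lemma not_xzExp_add_single_two_le_of_mem_support {g : MvPolynomial (Fin (n + 2)) K}
    (hg : g ∈ diamondBasis K n)
    (hne : g ≠ xP K n * zP K n * (yP K n yLast ^ 2 - xP K n * zP K n))
    {m : Fin (n + 2) →₀ ℕ} (hm : m ∈ g.support) : ¬ xzExp + Finsupp.single (yIdx yLast) 2 ≤ m := by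
  intro hle
  have hy := hle (yIdx yLast)
  rcases hg with (⟨i, j, hij, rfl⟩ | ⟨k, hk, rfl⟩) | rfl
  · rcases (mem_support_yP_mul_yP_sub K).1 hm with rfl | rfl <;>
      simp [xzExp, yyExp, Finsupp.single_apply] at hy
    split_ifs at hy <;> subst_vars <;> simp_all
  · rcases (mem_support_xP_mul_zP_mul_yP_sub K hk).1 hm with rfl | rfl <;>
      simp [xzExp, hk.ne] at hy
  · rcases (mem_support_xP_mul_zP_mul_yP_sq_sub K).1 hm with rfl | rfl
    · exact hne rfl
    · simp [xzExp] at hy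

lemma diamondBasis_reduced :
    ∀ g ∈ diamondBasis K n, ∀ g' ∈ diamondBasis K n, g ≠ g' →
      ∀ m', IsLeadMon g' m' → ∀ m ∈ g.support, ¬ m' ≤ m := by
  rintro g hg g' ((⟨i, j, hij, rfl⟩ | ⟨k, hk, rfl⟩) | rfl) hne m' hm' m hm
  · rw [hm'.unique (isLeadMon_yP_mul_yP_sub K i j)]
    exact not_yyExp_le_of_mem_support hij hg hne hm
  · rw [hm'.unique (isLeadMon_xP_mul_zP_mul_yP_sub K hk)]
    exact not_xzExp_add_single_le_of_mem_support hk hg hne hm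
  · rw [hm'.unique (isLeadMon_xP_mul_zP_mul_yP_sq_sub K yLast)]
    exact not_xzExp_add_single_two_le_of_mem_support hg hne hm

end Basis

end Diamond

open Diamond in
theorem reduced_groebner_basis_of_diamond (K : Type*) [Field K] (n : ℕ) (hn : 3 ≤ n) :
    IsReducedGroebnerBasis
      ({f | ∃ i j : Fin n, i < j ∧ f = yP K n i * yP K n j - xP K n * zP K n} ∪
        {f | ∃ k : Fin n, (k : ℕ) < n - 1 ∧
          f = xP K n * zP K n * (yP K n k - yP K n ⟨n - 1, by omega⟩)} ∪
        {xP K n * zP K n * ((yP K n ⟨n - 1, by omega⟩) ^ 2 - xP K n * zP K n)})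
      (diamondIdeal K n) := by
  have : NeZero n := ⟨by omega⟩
  exact ⟨isGroebnerBasis_diamondBasis hn, diamondBasis_monic, diamondBasis_reduced⟩
end

section
/- For n ≥ 3, the monomial ideal in_<(I) = (y_i y_j : 1 ≤ i < j ≤ n) + (x y_k z : 1 ≤ k ≤ n−1) + (x y_n² z) in S = K[x, y_1, …, y_n, z] has linear quotients with respect to the ordering y_1y_2, y_1y_3, …, y_1y_n, y_2y_3, …, y_2y_n, …, y_{n−1}y_n, xy_1z, xy_2z, …, xy_{n−1}z, xy_n²z of its minimal monomial generators; that is, for each k ≥ 2, the colon ideal (f_1, …, f_{k−1}) : f_k is generated by variables. -/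
open MvPolynomial

/-- The minimal monomial generators of `in_<(I)` in the order
`y_1y_2, y_1y_3, …, y_1y_n, y_2y_3, …, y_2y_n, …, y_{n-1}y_n, xy_1z, …, xy_{n-1}z, xy_n²z`. -/
noncomputable def genList (K : Type*) [Field K] (n : ℕ) (hn : 1 ≤ n) :
    List (MvPolynomial (Fin (n + 2)) K) :=
  ((List.finRange n).flatMap fun i =>
      (((List.finRange n).filter fun j => decide (i < j)).map fun j => yP K n i * yP K n j)) ++
    (((List.finRange n).filter fun k : Fin n => decide (k.1 < n - 1)).map
      fun k => xP K n * yP K n k * zP K n) ++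
    [xP K n * (yP K n ⟨n - 1, by omega⟩) ^ 2 * zP K n]

/-!
For monomials, `(m^s : s ∈ A) : m^a` is generated by the monomials `m^s / gcd(m^s, m^a)`. Hence it
is generated by the variables `x_t` (`t ∈ T`) as soon as every `x_t m^a` is divisible by some
`m^s`, and every `m^s / gcd(m^s, m^a)` by some `x_t`. Checking this along the given order, the
colon ideal at `y_i y_j` is `(y_a : a < j, a ≠ i)`, at `x y_k z` it is `(y_a : a ≠ k)`, and at
`x y_n² z` it is `(y_1, …, y_{n-1})`.
-/

theorem MvPolynomial.colon_span_monomial_eq_span_X {σ R : Type*} [CommSemiring R]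
    (A : Set (σ →₀ ℕ)) (a : σ →₀ ℕ) (T : Set σ)
    (hT : ∀ t ∈ T, ∃ s ∈ A, s ≤ Finsupp.single t 1 + a)
    (hA : ∀ s ∈ A, ∃ t ∈ T, a t < s t) :
    Submodule.colon (Ideal.span ((fun s => monomial s (1 : R)) '' A))
        (Ideal.span {monomial a (1 : R)}) =
      Ideal.span (X '' T) := by
  apply le_antisymm
  · intro r hr
    rw [Ideal.mem_colon_span_singleton, mem_ideal_span_monomial_image] at hr
    rw [mem_ideal_span_X_image]
    intro m hm
    have hma : m + a ∈ (r * monomial a 1).support := by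
      rwa [mem_support_iff, coeff_mul_monomial, mul_one, ← mem_support_iff]
    obtain ⟨s, hs, hsm⟩ := hr _ hma
    obtain ⟨t, ht, hat⟩ := hA s hs
    exact ⟨t, ht, by have := hsm t; simp only [Finsupp.add_apply] at this; omega⟩
  · rw [Ideal.span_le]
    rintro _ ⟨t, ht, rfl⟩
    rw [SetLike.mem_coe, Ideal.mem_colon_span_singleton, X, monomial_mul, one_mul,
      mem_ideal_span_monomial_image]
    intro m hm
    rw [Finset.mem_singleton.mp (support_monomial_subset hm)]
    exact hT t ht

theorem List.mem_take_iff_lt_of_pairwise {α β : Type*} [LinearOrder β] (f : α → β) {l : List α}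
    (hl : l.Pairwise (fun a b => f a < f b)) {k : ℕ} (hk : k < l.length) {x : α} (hx : x ∈ l) :
    x ∈ l.take k ↔ f x < f l[k] := by
  rw [← List.take_append_drop k l, List.pairwise_append] at hl
  rw [List.drop_eq_getElem_cons hk, List.pairwise_cons] at hl
  rw [← List.take_append_drop k l, List.drop_eq_getElem_cons hk] at hx
  constructor
  · intro h
    exact hl.2.2 x h _ List.mem_cons_self
  · intro h
    simp only [List.mem_append, List.mem_cons] at hx
    rcases hx with hx | rfl | hx
    · exact hx
    · exact absurd h (lt_irrefl _)
    · exact absurd (hl.2.1.1 x hx) (asymm h)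

lemma Nat.lt_or_eq_and_lt_of_mul_add_lt {n a b c d : ℕ} (hd : d < n)
    (h : a * n + b < c * n + d) : a < c ∨ a = c ∧ b < d := by
  rcases lt_trichotomy a c with hac | rfl | hac
  · exact Or.inl hac
  · exact Or.inr ⟨rfl, by omega⟩
  · nlinarith

def yVar {n : ℕ} (i : Fin n) : Fin (n + 2) := i.succ.castSucc

lemma yVar_injective {n : ℕ} : Function.Injective (yVar : Fin n → Fin (n + 2)) :=
  (Fin.castSucc_injective _).comp (Fin.succ_injective _)

lemma yVar_ne_zero {n : ℕ} (i : Fin n) : yVar i ≠ 0 :=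
  Fin.castSucc_ne_zero_iff.2 (Fin.succ_ne_zero i)

lemma yVar_ne_last {n : ℕ} (i : Fin n) : yVar i ≠ Fin.last (n + 1) :=
  (Fin.castSucc_lt_last _).ne

/-- `yy i j`, `xyz k` and `xyyz` stand for `y_{i+1} y_{j+1}`, `x y_{k+1} z` and `x y_n² z`. -/
inductive DiamondGen (n : ℕ) where
  | yy (i j : Fin n)
  | xyz (k : Fin n)
  | xyyz

namespace DiamondGen

open Finsupp (single)

variable {n : ℕ}

noncomputable def exp : DiamondGen n → (Fin (n + 2) →₀ ℕ)
  | yy i j => single (yVar i) 1 + single (yVar j) 1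
  | xyz k => single 0 1 + single (yVar k) 1 + single (Fin.last (n + 1)) 1
  | xyyz => single 0 1 + single (Fin.last n).castSucc 2 + single (Fin.last (n + 1)) 1

def key : DiamondGen n → ℕ
  | yy i j => i * n + j
  | xyz k => n * n + k
  | xyyz => n * n + n

variable (n) in
def list : List (DiamondGen n) :=
  ((List.finRange n).flatMap fun i =>
      (((List.finRange n).filter fun j => decide (i < j)).map fun j => yy i j)) ++
    (((List.finRange n).filter fun k : Fin n => decide (k.1 < n - 1)).map xyz) ++
    [xyyz]

@[simp] lemma exp_yy_apply_yVar (i j b : Fin n) :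
    (yy i j).exp (yVar b) = (if i = b then 1 else 0) + (if j = b then 1 else 0) := by
  simp [exp, Finsupp.single_apply, yVar_injective.eq_iff]

@[simp] lemma exp_xyz_apply_yVar (k b : Fin n) : (xyz k).exp (yVar b) = if k = b then 1 else 0 := by
  simp [exp, Finsupp.single_apply, yVar_injective.eq_iff, (yVar_ne_zero b).symm,
    (yVar_ne_last b).symm]

@[simp] lemma exp_xyyz_apply_yVar (b : Fin n) :
    (xyyz : DiamondGen n).exp (yVar b) = if b.1 = n - 1 then 2 else 0 := by
  have hb : (Fin.last n).castSucc = yVar b ↔ b.1 = n - 1 := by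
    simp only [yVar, Fin.ext_iff, Fin.val_castSucc, Fin.val_last, Fin.val_succ]; omega
  simp only [exp, Finsupp.add_apply, Finsupp.single_apply, hb, (yVar_ne_zero b).symm,
    (yVar_ne_last b).symm, if_false, zero_add, add_zero]

@[simp] lemma yy_mem_list {i j : Fin n} : yy i j ∈ list n ↔ i < j := by
  simp [list]

@[simp] lemma xyz_mem_list {k : Fin n} : xyz k ∈ list n ↔ k.1 < n - 1 := by
  simp [list]

lemma key_yy_lt_sq (i j : Fin n) : key (yy i j) < n * n := by
  simp only [key]; nlinarith [i.2, j.2]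

lemma pairwise_key_list : (list n).Pairwise (key · < key ·) := by
  have hlt := List.pairwise_lt_finRange n
  simp only [list, List.append_assoc, List.pairwise_append, List.pairwise_flatMap,
    List.mem_finRange, List.pairwise_map, forall_const, List.mem_map, List.mem_filter,
    decide_eq_true_eq, true_and, forall_exists_index, and_imp, forall_apply_eq_imp_iff₂,
    List.pairwise_cons, List.not_mem_nil, IsEmpty.forall_iff, implies_true, List.Pairwise.nil,
    and_self, List.mem_cons, or_false, forall_eq, List.mem_flatMap, List.mem_append]
  refine ⟨⟨fun i => (hlt.filter _).imp fun h => ?_, hlt.imp fun {i₁ i₂} h a _ b _ => ?_⟩, ?_⟩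
  · simp only [key]; omega
  · have : (i₁ : ℕ) + 1 ≤ i₂ := h
    simp only [key]; nlinarith [a.2]
  refine ⟨⟨(hlt.filter _).imp fun h => ?_, fun k _ => ?_⟩, ?_⟩
  · simp only [key]; omega
  · simp only [key]; omega
  rintro _ i j - rfl _ (⟨k, -, rfl⟩ | rfl) <;> have := key_yy_lt_sq i j <;>
    simp only [key] at this ⊢ <;> omega

variable (K : Type*) [Field K]

lemma monomial_exp_yy (i j : Fin n) : monomial (yy i j).exp (1 : K) = yP K n i * yP K n j := by
  simp only [exp, yP, yVar, X, monomial_mul, one_mul]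

lemma monomial_exp_xyz (k : Fin n) :
    monomial (xyz k).exp (1 : K) = xP K n * yP K n k * zP K n := by
  simp only [exp, xP, yP, zP, yVar, X, monomial_mul, one_mul]

lemma monomial_exp_xyyz (hn : 1 ≤ n) :
    monomial (xyyz : DiamondGen n).exp (1 : K) =
      xP K n * yP K n ⟨n - 1, by omega⟩ ^ 2 * zP K n := by
  have : (⟨n - 1, by omega⟩ : Fin n).succ.castSucc = (Fin.last n).castSucc := by
    ext; simp only [Fin.succ_mk, Fin.castSucc_mk, Fin.val_castSucc, Fin.val_last]; omega
  simp only [exp, xP, yP, zP, this, X, monomial_pow, monomial_mul, one_pow,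
    Finsupp.smul_single, smul_eq_mul, mul_one]

lemma genList_eq_map (hn : 1 ≤ n) :
    genList K n hn = (list n).map fun g => monomial g.exp (1 : K) := by
  simp [genList, list, List.map_flatMap, Function.comp_def, monomial_exp_yy, monomial_exp_xyz,
    monomial_exp_xyyz K hn]

lemma length_genList (hn : 1 ≤ n) : (genList K n hn).length = (list n).length := by
  rw [genList_eq_map, List.length_map]

/-- The criterion of `colon_span_monomial_eq_span_X` for the generators before `g` and the
variables `T`. -/
def IsColonVars (g : DiamondGen n) (T : Set (Fin (n + 2))) : Prop :=
  (∀ t ∈ T, ∃ g' ∈ list n, g'.key < g.key ∧ g'.exp ≤ single t 1 + g.exp) ∧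
    ∀ g' ∈ list n, g'.key < g.key → ∃ t ∈ T, g.exp t < g'.exp t

lemma colon_genList_eq_span_X (hn : 1 ≤ n) {k : ℕ} (hk : k < (genList K n hn).length)
    {T : Set (Fin (n + 2))} (hT : IsColonVars ((list n)[k]'(length_genList K hn ▸ hk)) T) :
    Submodule.colon (Ideal.span {f | f ∈ (genList K n hn).take k})
        (Ideal.span {(genList K n hn)[k]'hk}) = Ideal.span (X '' T) := by
  have hk' : k < (list n).length := length_genList K hn ▸ hk
  have hmem (g : DiamondGen n) (hg : g ∈ list n) :=
    List.mem_take_iff_lt_of_pairwise key pairwise_key_list hk' hg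
  have hA : {f | f ∈ (genList K n hn).take k} =
      (fun s => monomial s (1 : K)) '' (exp '' {g | g ∈ (list n).take k}) := by
    ext f
    simp [genList_eq_map, ← List.map_take]
  have hB : (genList K n hn)[k] = monomial ((list n)[k]).exp (1 : K) := by
    simp only [genList_eq_map, List.getElem_map]
  rw [hA, hB]
  apply colon_span_monomial_eq_span_X
  · intro t ht
    obtain ⟨g, hg, hkey, hle⟩ := hT.1 t ht
    exact ⟨g.exp, ⟨g, (hmem g hg).2 hkey, rfl⟩, hle⟩
  · rintro _ ⟨g, hg, rfl⟩
    have hg' : g ∈ list n := List.take_subset k _ hg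
    exact hT.2 g hg' ((hmem g hg').1 hg)

lemma isColonVars_yy {i j : Fin n} (hij : i < j) :
    IsColonVars (yy i j) (yVar '' {a | a < j ∧ a ≠ i}) := by
  constructor
  · rintro _ ⟨a, ⟨haj, hai⟩, rfl⟩
    rcases hai.lt_or_gt with hai | hai
    · refine ⟨yy a i, yy_mem_list.2 hai, ?_, ?_⟩
      · have := Nat.mul_le_mul_right n (show a.1 + 1 ≤ i from hai)
        simp only [key]; rw [add_mul, one_mul] at this; omega
      · exact (le_self_add (b := single (yVar j) 1)).trans_eq (by simp only [exp]; abel)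
    · refine ⟨yy i a, yy_mem_list.2 hai, ?_, ?_⟩
      · simp only [key]; have : a.1 < j := haj; omega
      · exact (le_self_add (b := single (yVar j) 1)).trans_eq (by simp only [exp]; abel)
  · rintro (⟨i', j'⟩ | k | _) hg hkey
    · have hij' : i' < j' := yy_mem_list.1 hg
      rcases Nat.lt_or_eq_and_lt_of_mul_add_lt j.2 hkey with hi | ⟨hi, hj⟩
      · exact ⟨yVar i', ⟨i', ⟨by omega, by omega⟩, rfl⟩, by
          simp only [exp_yy_apply_yVar, Fin.ext_iff]; split_ifs <;> omega⟩
      · exact ⟨yVar j', ⟨j', ⟨hj, by omega⟩, rfl⟩, by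
          simp only [exp_yy_apply_yVar, Fin.ext_iff]; split_ifs <;> omega⟩
    all_goals have := key_yy_lt_sq i j; simp only [key] at this hkey; omega

lemma isColonVars_xyz (k : Fin n) : IsColonVars (xyz k) (yVar '' {a | a ≠ k}) := by
  constructor
  · rintro _ ⟨a, hak, rfl⟩
    rcases (show a ≠ k from hak).lt_or_gt with hak | hak
    · refine ⟨yy a k, yy_mem_list.2 hak, (key_yy_lt_sq a k).trans_le (Nat.le_add_right _ _), ?_⟩
      exact (le_self_add (b := single 0 1 + single (Fin.last (n + 1)) 1)).trans_eq
        (by simp only [exp]; abel)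
    · refine ⟨yy k a, yy_mem_list.2 hak, (key_yy_lt_sq k a).trans_le (Nat.le_add_right _ _), ?_⟩
      exact (le_self_add (b := single 0 1 + single (Fin.last (n + 1)) 1)).trans_eq
        (by simp only [exp]; abel)
  · rintro (⟨i', j'⟩ | l | _) hg hkey
    · have hij' : i' < j' := yy_mem_list.1 hg
      by_cases hi : i' = k
      · exact ⟨yVar j', ⟨j', (hi ▸ hij').ne', rfl⟩, by
          simp only [exp_xyz_apply_yVar, exp_yy_apply_yVar, Fin.ext_iff]; split_ifs <;> omega⟩
      · exact ⟨yVar i', ⟨i', hi, rfl⟩, by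
          simp only [exp_xyz_apply_yVar, exp_yy_apply_yVar, Fin.ext_iff]; split_ifs <;> omega⟩
    · simp only [key] at hkey
      exact ⟨yVar l, ⟨l, Fin.ne_of_val_ne (by omega), rfl⟩, by
        simp only [exp_xyz_apply_yVar, Fin.ext_iff]; split_ifs <;> omega⟩
    · simp only [key] at hkey; omega

lemma isColonVars_xyyz : IsColonVars (xyyz : DiamondGen n) (yVar '' {a | a.1 < n - 1}) := by
  constructor
  · rintro _ ⟨a, ha, rfl⟩
    refine ⟨xyz a, xyz_mem_list.2 ha, by simp only [key]; omega, ?_⟩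
    exact (le_self_add (b := single (Fin.last n).castSucc 2)).trans_eq
      (by simp only [exp]; abel)
  · rintro (⟨i', j'⟩ | l | _) hg hkey
    · have hij' : i'.1 < j' := yy_mem_list.1 hg
      exact ⟨yVar i', ⟨i', show i'.1 < n - 1 by omega, rfl⟩, by
        simp only [exp_xyyz_apply_yVar, exp_yy_apply_yVar, Fin.ext_iff]; split_ifs <;> omega⟩
    · have hl : l.1 < n - 1 := xyz_mem_list.1 hg
      exact ⟨yVar l, ⟨l, hl, rfl⟩, by
        simp only [exp_xyyz_apply_yVar, exp_xyz_apply_yVar]; split_ifs <;> omega⟩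
    · exact absurd hkey (lt_irrefl _)

end DiamondGen

open DiamondGen in
/-- `in_<(I)` has linear quotients w.r.t. the above ordering of its minimal monomial
generators: each colon ideal `(f_1, …, f_{k-1}) : f_k` is generated by a set of variables. -/
theorem diamond_ini_linear_quotients (K : Type*) [Field K] (n : ℕ) (hn : 3 ≤ n) :
    ∀ (k : ℕ) (hk : k < (genList K n (by omega)).length), 1 ≤ k →
      ∃ T : Set (Fin (n + 2)),
        Submodule.colon
            (Ideal.span {f | f ∈ (genList K n (by omega)).take k})
            (Ideal.span {(genList K n (by omega))[k]'hk}) =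
          Ideal.span (X '' T) := by
  intro k hk _
  have hk' : k < (list n).length := by rwa [length_genList] at hk
  have hg := List.getElem_mem hk'
  rcases h : (list n)[k]'hk' with ⟨i, j⟩ | l | _
  · exact ⟨_, colon_genList_eq_span_X K _ hk (h ▸ isColonVars_yy (yy_mem_list.1 (h ▸ hg)))⟩
  · exact ⟨_, colon_genList_eq_span_X K _ hk (h ▸ isColonVars_xyz l)⟩
  · exact ⟨_, colon_genList_eq_span_X K _ hk (h ▸ isColonVars_xyyz)⟩
end

section
/- For n ≥ 3, the quotient S/(I, z) is isomorphic as a graded K-algebra to K[x, y_1, …, y_n]/(y_i y_j : 1 ≤ i < j ≤ n), and it is Cohen-Macaulay of Krull dimension 2, where I = (y_i y_j − xz : 1 ≤ i < j ≤ n) is the join-meet ideal of the diamond lattice D_{n+2} in S = K[x, y_1, …, y_n, z]. -/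
open MvPolynomial

/-- Regular sequence (elementwise colon characterization). -/
def IsRegSeq {R : Type*} [CommRing R] {m : ℕ} (f : Fin m → R) : Prop :=
  (∀ k : Fin m, ∀ s : R,
      f k * s ∈ Ideal.span (f '' {j | j < k}) → s ∈ Ideal.span (f '' {j | j < k})) ∧
    Ideal.span (Set.range f) ≠ ⊤

/-- Cohen–Macaulay of dimension `m` for a graded quotient of a polynomial ring. -/
def IsCMofDim {K : Type*} [Field K] {σ : Type*} (I : Ideal (MvPolynomial σ K)) (m : ℕ) :
    Prop :=
  ringKrullDim (MvPolynomial σ K ⧸ I) = m ∧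
    ∃ f : Fin m → (MvPolynomial σ K ⧸ I),
      (∀ i, f i ∈ Ideal.map (Ideal.Quotient.mk I)
        (Ideal.span (Set.range (X : σ → MvPolynomial σ K)))) ∧
      IsRegSeq f

/-- The squarefree monomial ideal `(y_iy_j : i < j)` in `K[x, y_1, …, y_n]`,
where `x = X 0` and `y_i = X i` in `MvPolynomial (Fin (n+1)) K`. -/
noncomputable def yyIdeal (K : Type*) [Field K] (n : ℕ) :
    Ideal (MvPolynomial (Fin (n + 1)) K) :=
  Ideal.span {f | ∃ i j : Fin n, i < j ∧ f = X i.succ * X j.succ}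

/-!
Setting `z = 0` turns every binomial `y_i y_j - x z` into the monomial `y_i y_j`, which gives the
isomorphism. A prime containing all `y_i y_j` contains all but at most one `y_k`, so the quotient is
covered by the planes `K[x, y_k]` and has dimension `2`. No generator involves `x`, so `x` is a
nonzerodivisor. Modulo `x` the monomials outside the ideal are the pure powers `y_k ^ a`, and
`(y_1 + ⋯ + y_n) y_k ^ a ≡ y_k ^ (a + 1)`, so `y_1 + ⋯ + y_n` is a nonzerodivisor there.
-/

theorem ringKrullDim_quotient_le_of_forall_isPrime {R ι : Type*} [CommRing R] (I : Ideal R)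
    (P : ι → Ideal R) {d : ℕ} (hP : ∀ i, ringKrullDim (R ⧸ P i) ≤ d)
    (hI : ∀ p : Ideal R, p.IsPrime → I ≤ p → ∃ i, P i ≤ p) :
    ringKrullDim (R ⧸ I) ≤ d := by
  rw [ringKrullDim_quotient]
  refine iSup_le fun l => ?_
  obtain ⟨i, hi⟩ := hI _ l.head.1.isPrime l.head.2
  let l' : LTSeries (PrimeSpectrum.zeroLocus (R := R) (P i)) :=
    ⟨l.length, fun j => ⟨l j, hi.trans (l.head_le j)⟩, fun j => l.step j⟩
  calc (l.length : WithBot ℕ∞) = l'.length := rfl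
    _ ≤ _ := Order.LTSeries.length_le_krullDim l'
    _ ≤ d := ringKrullDim_quotient (P i) ▸ hP i

theorem ringKrullDim_mvPolynomial_fin (K : Type*) [Field K] (m : ℕ) :
    ringKrullDim (MvPolynomial (Fin m) K) = m := by
  rw [MvPolynomial.ringKrullDim_of_isNoetherianRing,
    ringKrullDim_eq_zero_of_isField (Field.toIsField K), Nat.card_eq_fintype_card,
    Fintype.card_fin, zero_add]

theorem IsRegSeq.map_ringEquiv {R S : Type*} [CommRing R] [CommRing S] {m : ℕ}
    (e : R ≃+* S) {f : Fin m → R} (h : IsRegSeq f) : IsRegSeq (e ∘ f) := by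
  have hspan (t : Set (Fin m)) :
      Ideal.span ((e ∘ f) '' t) = (Ideal.span (f '' t)).comap e.symm := by
    rw [Set.image_comp, ← Ideal.map_span, Ideal.comap_symm]
  refine ⟨fun k s hs => ?_, ?_⟩
  · rw [hspan] at hs ⊢
    rw [Ideal.mem_comap, map_mul, Function.comp_apply, e.symm_apply_apply] at hs
    exact h.1 k (e.symm s) hs
  · rw [← Set.image_univ, hspan, Set.image_univ]
    exact Ideal.comap_ne_top _ h.2

theorem isRegSeq_pair {R : Type*} [CommRing R] {a b : R}
    (ha : ∀ s, a * s = 0 → s = 0) (hb : ∀ s, b * s ∈ Ideal.span {a} → s ∈ Ideal.span {a})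
    (hab : Ideal.span {a, b} ≠ ⊤) : IsRegSeq ![a, b] := by
  refine ⟨fun k s => ?_, ?_⟩
  · fin_cases k
    · simpa [Fin.lt_def] using ha s
    · have : {j : Fin 2 | j < 1} = {0} := by ext j; fin_cases j <;> simp
      simpa [this] using hb s
  · rwa [Matrix.range_cons, Matrix.range_cons, Matrix.range_empty, Set.union_empty,
      Set.singleton_union]

theorem Finsupp.single_add_single_le_iff {σ : Type*} {i j : σ} (hij : i ≠ j) {m : σ →₀ ℕ} :
    single i 1 + single j 1 ≤ m ↔ m i ≠ 0 ∧ m j ≠ 0 := by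
  classical
  refine ⟨fun h => ⟨?_, ?_⟩, fun ⟨hi, hj⟩ k => ?_⟩
  · simpa [hij, Nat.one_le_iff_ne_zero] using h i
  · simpa [hij, Nat.one_le_iff_ne_zero] using h j
  · by_cases hki : k = i
    · subst hki
      simpa [hij, Nat.one_le_iff_ne_zero] using hi
    · by_cases hkj : k = j
      · subst hkj
        simpa [hki, Nat.one_le_iff_ne_zero] using hj
      · simp [Ne.symm hki, Ne.symm hkj]

namespace MvPolynomial

theorem X_mul_mem_span_monomial_iff {σ R : Type*} [CommSemiring R] {A : Set (σ →₀ ℕ)} {i : σ}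
    (hA : ∀ a ∈ A, a i = 0) {s : MvPolynomial σ R} :
    X i * s ∈ Ideal.span ((fun a => monomial a (1 : R)) '' A) ↔
      s ∈ Ideal.span ((fun a => monomial a (1 : R)) '' A) := by
  classical
  have hle (a : σ →₀ ℕ) (ha : a ∈ A) (m : σ →₀ ℕ) : a ≤ Finsupp.single i 1 + m ↔ a ≤ m := by
    refine ⟨fun h j => ?_, fun h => h.trans le_add_self⟩
    by_cases hj : j = i
    · simp [hj, hA a ha]
    · simpa [Finsupp.single_apply, Ne.symm hj] using h j
  simp only [mem_ideal_span_monomial_image, support_X_mul, Finset.mem_map, addLeftEmbedding_apply,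
    forall_exists_index, and_imp, forall_apply_eq_imp_iff₂]
  exact forall₂_congr fun m _ => exists_congr fun a => and_congr_right fun ha => hle a ha m

variable (R : Type*) [CommRing R] (n : ℕ)

noncomputable def lastVarToZero : MvPolynomial (Fin (n + 1)) R →ₐ[R] MvPolynomial (Fin n) R :=
  aeval (Fin.lastCases 0 X)

variable {R n}

@[simp]
theorem lastVarToZero_X_castSucc (i : Fin n) : lastVarToZero R n (X i.castSucc) = X i := by
  simp [lastVarToZero]

@[simp]
theorem lastVarToZero_X_last : lastVarToZero R n (X (Fin.last n)) = 0 := by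
  simp [lastVarToZero]

theorem rename_lastVarToZero_sub_mem (p : MvPolynomial (Fin (n + 1)) R) :
    rename Fin.castSucc (lastVarToZero R n p) - p ∈ Ideal.span {X (Fin.last n)} := by
  rw [← Ideal.Quotient.eq, ← Ideal.Quotient.mkₐ_eq_mk R]
  refine AlgHom.congr_fun (φ₁ := (Ideal.Quotient.mkₐ R _).comp
    ((rename Fin.castSucc).comp (lastVarToZero R n))) (algHom_ext fun i => ?_) p
  induction i using Fin.lastCases with
  | last => simp
  | cast i => simp

noncomputable def quotientSupSpanXLastEquiv (I : Ideal (MvPolynomial (Fin (n + 1)) R)) :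
    (MvPolynomial (Fin (n + 1)) R ⧸ (I ⊔ Ideal.span {X (Fin.last n)})) ≃ₐ[R]
      MvPolynomial (Fin n) R ⧸ I.map (lastVarToZero R n) :=
  AlgEquiv.ofAlgHom
    (Ideal.quotientMapₐ _ (lastVarToZero R n) <| sup_le Ideal.le_comap_map <| by
      simp [Ideal.span_le])
    (Ideal.quotientMapₐ _ (rename Fin.castSucc) <| Ideal.map_le_iff_le_comap.mpr fun p hp => by
      simpa using Ideal.add_mem _ (Ideal.mem_sup_right (rename_lastVarToZero_sub_mem p))
        (Ideal.mem_sup_left hp))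
    (Ideal.Quotient.algHom_ext _ <| algHom_ext fun i => by simp)
    (Ideal.Quotient.algHom_ext _ <| algHom_ext fun i => by
      induction i using Fin.lastCases with
      | last => simpa using (Ideal.Quotient.eq_zero_iff_mem.mpr
          (Ideal.mem_sup_right (Ideal.mem_span_singleton_self _))).symm
      | cast i => simp)

end MvPolynomial

section yyIdeal

variable {K : Type*} [Field K] {n : ℕ}

variable (K) in
/-- Restriction to the plane `y_j = 0 (j ≠ k)`, whose coordinates `x, y_k` are `X 0, X 1`. -/
noncomputable def yyChart (k : Fin n) : MvPolynomial (Fin (n + 1)) K →ₐ[K] MvPolynomial (Fin 2) K :=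
  aeval (Fin.cases (X 0) fun j => if j = k then X 1 else 0)

variable (K) in
noncomputable def yyComponentIdeal (k : Fin n) : Ideal (MvPolynomial (Fin (n + 1)) K) :=
  Ideal.span {p | ∃ j, j ≠ k ∧ p = X j.succ}

theorem yyChart_surjective (k : Fin n) : Function.Surjective (yyChart K k) := by
  refine Function.LeftInverse.surjective (g := aeval ![X 0, X k.succ]) fun p => ?_
  change ((yyChart K k).comp (aeval ![X 0, X k.succ])) p = AlgHom.id K _ p
  congr 1
  ext i
  fin_cases i <;> simp [yyChart]

theorem yyIdeal_le_ker_yyChart (k : Fin n) : yyIdeal K n ≤ RingHom.ker (yyChart K k) := by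
  rw [yyIdeal, Ideal.span_le]
  rintro _ ⟨i, j, hij, rfl⟩
  by_cases hi : i = k
  · subst hi
    simp [yyChart, hij.ne']
  · simp [yyChart, hi]

theorem two_le_ringKrullDim_quotient_yyIdeal (k : Fin n) :
    2 ≤ ringKrullDim (MvPolynomial (Fin (n + 1)) K ⧸ yyIdeal K n) := by
  have := ringKrullDim_le_of_surjective
    (Ideal.Quotient.lift _ (yyChart K k).toRingHom (yyIdeal_le_ker_yyChart k))
    (Ideal.Quotient.lift_surjective_of_surjective _ _ (yyChart_surjective k))
  rwa [ringKrullDim_mvPolynomial_fin, Nat.cast_ofNat] at this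

theorem ringKrullDim_quotient_yyComponentIdeal_le (k : Fin n) :
    ringKrullDim (MvPolynomial (Fin (n + 1)) K ⧸ yyComponentIdeal K k) ≤ 2 := by
  set W := yyComponentIdeal K k
  let φ : MvPolynomial (Fin 2) K →ₐ[K] MvPolynomial (Fin (n + 1)) K ⧸ W :=
    aeval ![Ideal.Quotient.mk W (X 0), Ideal.Quotient.mk W (X k.succ)]
  have hφ : φ.comp (yyChart K k) = Ideal.Quotient.mkₐ K W := by
    refine algHom_ext fun i => ?_
    induction i using Fin.cases with
    | zero => simp [φ, yyChart]
    | succ j =>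
      by_cases hj : j = k
      · subst hj
        simp [φ, yyChart]
      · have hW : X j.succ ∈ W := Ideal.subset_span ⟨j, hj, rfl⟩
        simp [φ, yyChart, hj, Ideal.Quotient.eq_zero_iff_mem.mpr hW]
  have hsurj : Function.Surjective φ := fun q => by
    obtain ⟨p, rfl⟩ := Ideal.Quotient.mk_surjective q
    exact ⟨yyChart K k p, AlgHom.congr_fun hφ p⟩
  have := ringKrullDim_le_of_surjective φ.toRingHom hsurj
  rwa [ringKrullDim_mvPolynomial_fin, Nat.cast_ofNat] at this

theorem exists_yyComponentIdeal_le (hn : 0 < n) {p : Ideal (MvPolynomial (Fin (n + 1)) K)}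
    (hp : p.IsPrime) (h : yyIdeal K n ≤ p) : ∃ k : Fin n, yyComponentIdeal K k ≤ p := by
  by_cases hall : ∀ j : Fin n, X j.succ ∈ p
  · exact ⟨⟨0, hn⟩, Ideal.span_le.mpr <| by rintro _ ⟨j, -, rfl⟩; exact hall j⟩
  push Not at hall
  obtain ⟨k, hk⟩ := hall
  refine ⟨k, Ideal.span_le.mpr ?_⟩
  rintro _ ⟨j, hjk, rfl⟩
  have hjk' : X j.succ * X k.succ ∈ p := by
    rcases lt_or_gt_of_ne hjk with hlt | hlt
    · exact h (Ideal.subset_span ⟨j, k, hlt, rfl⟩)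
    · exact mul_comm (X k.succ : MvPolynomial _ K) _ ▸ h (Ideal.subset_span ⟨k, j, hlt, rfl⟩)
  exact (hp.mem_or_mem hjk').resolve_right hk

theorem ringKrullDim_quotient_yyIdeal (hn : 0 < n) :
    ringKrullDim (MvPolynomial (Fin (n + 1)) K ⧸ yyIdeal K n) = 2 :=
  le_antisymm
    (ringKrullDim_quotient_le_of_forall_isPrime (d := 2) _ _
      ringKrullDim_quotient_yyComponentIdeal_le fun _ hp h => exists_yyComponentIdeal_le hn hp h)
    (two_le_ringKrullDim_quotient_yyIdeal ⟨0, hn⟩)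

theorem yyIdeal_eq_span_monomial : yyIdeal K n = Ideal.span ((fun u => monomial u (1 : K)) ''
    {u | ∃ i j : Fin n, i < j ∧ u = Finsupp.single i.succ 1 + Finsupp.single j.succ 1}) := by
  rw [yyIdeal]
  congr 1
  ext f
  simp [X, monomial_mul, eq_comm]

theorem X_zero_mul_mem_yyIdeal_iff {s : MvPolynomial (Fin (n + 1)) K} :
    X 0 * s ∈ yyIdeal K n ↔ s ∈ yyIdeal K n := by
  rw [yyIdeal_eq_span_monomial]
  refine X_mul_mem_span_monomial_iff ?_
  rintro _ ⟨i, j, -, rfl⟩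
  simp [Fin.succ_ne_zero]

theorem mem_yyIdeal_sup_span_X_zero_iff {p : MvPolynomial (Fin (n + 1)) K} :
    p ∈ yyIdeal K n ⊔ Ideal.span {X 0} ↔
      ∀ m ∈ p.support, m 0 ≠ 0 ∨ ∃ i j : Fin n, i < j ∧ m i.succ ≠ 0 ∧ m j.succ ≠ 0 := by
  have hspan : yyIdeal K n ⊔ Ideal.span {X 0} = Ideal.span ((fun u => monomial u (1 : K)) ''
      ({u | ∃ i j : Fin n, i < j ∧ u = Finsupp.single i.succ 1 + Finsupp.single j.succ 1} ∪
        {Finsupp.single 0 1})) := by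
    rw [Set.image_union, Ideal.span_union, yyIdeal_eq_span_monomial, Set.image_singleton]
    rfl
  rw [hspan, mem_ideal_span_monomial_image]
  refine forall₂_congr fun m _ => ?_
  simp only [Set.mem_union, Set.mem_ofPred_eq, Set.mem_singleton_iff, or_and_right, exists_or,
    exists_eq_left, Finsupp.single_le_iff, Nat.one_le_iff_ne_zero]
  rw [or_comm]
  refine or_congr_right ⟨?_, ?_⟩
  · rintro ⟨_, ⟨i, j, hij, rfl⟩, hle⟩
    exact ⟨i, j, hij, (Finsupp.single_add_single_le_iff (Fin.succ_injective _ |>.ne hij.ne)).mp hle⟩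
  · rintro ⟨i, j, hij, hm⟩
    exact ⟨_, ⟨i, j, hij, rfl⟩,
      (Finsupp.single_add_single_le_iff (Fin.succ_injective _ |>.ne hij.ne)).mpr hm⟩

theorem mem_yyIdeal_sup_span_X_zero_of_sum_X_succ_mul (hn : 0 < n)
    {s : MvPolynomial (Fin (n + 1)) K}
    (h : (∑ j : Fin n, X j.succ) * s ∈ yyIdeal K n ⊔ Ideal.span {X 0}) :
    s ∈ yyIdeal K n ⊔ Ideal.span {X 0} := by
  classical
  rw [mem_yyIdeal_sup_span_X_zero_iff] at h ⊢
  intro m hm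
  by_contra hbad
  push Not at hbad
  obtain ⟨hm0, hmy⟩ := hbad
  -- `m` is a power of a single variable `y_{i₀}`, and so is `m' = y_{i₀} m`
  obtain ⟨i₀, hi₀⟩ : ∃ i₀ : Fin n, ∀ j, j ≠ i₀ → m j.succ = 0 := by
    by_cases hex : ∃ i, m (Fin.succ i) ≠ 0
    · obtain ⟨i₀, hi₀⟩ := hex
      refine ⟨i₀, fun j hj => ?_⟩
      rcases lt_or_gt_of_ne hj with hlt | hlt
      · by_contra hj0
        exact hi₀ (hmy j i₀ hlt hj0)
      · exact hmy i₀ j hlt hi₀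
    · push Not at hex
      exact ⟨⟨0, hn⟩, fun j _ => hex j⟩
  set m' := Finsupp.single i₀.succ 1 + m
  have hm'y (j : Fin n) (hj : j ≠ i₀) : m' j.succ = 0 := by
    simp [m', Ne.symm hj, hi₀ j hj]
  have hcoeff : coeff m' ((∑ j : Fin n, X j.succ) * s) = coeff m s := by
    rw [Finset.sum_mul, coeff_sum, Finset.sum_eq_single i₀ (fun j _ hj => ?_) (by simp)]
    · exact coeff_X_mul m i₀.succ s
    · rw [coeff_X_mul', if_neg (by simpa using hm'y j hj)]
  rcases h m' (by rwa [mem_support_iff, hcoeff, ← mem_support_iff]) with h0 | ⟨i, j, hij, hi, hj⟩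
  · simp [m', Fin.succ_ne_zero, hm0] at h0
  · have hi' : i = i₀ := by_contra fun h => hi (hm'y i h)
    have hj' : j = i₀ := by_contra fun h => hj (hm'y j h)
    exact hij.ne (hi'.trans hj'.symm)

theorem isRegSeq_yyIdeal (hn : 0 < n) :
    IsRegSeq ![Ideal.Quotient.mk (yyIdeal K n) (X 0),
      Ideal.Quotient.mk (yyIdeal K n) (∑ j : Fin n, X j.succ)] := by
  have hspan : Ideal.span {Ideal.Quotient.mk (yyIdeal K n) (X 0)} =
      (Ideal.span {X 0}).map (Ideal.Quotient.mk (yyIdeal K n)) := by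
    rw [Ideal.map_span, Set.image_singleton]
  refine isRegSeq_pair (fun s hs => ?_) (fun s hs => ?_) ?_
  · obtain ⟨s, rfl⟩ := Ideal.Quotient.mk_surjective s
    rw [← map_mul, Ideal.Quotient.eq_zero_iff_mem, X_zero_mul_mem_yyIdeal_iff] at hs
    exact Ideal.Quotient.eq_zero_iff_mem.mpr hs
  · obtain ⟨s, rfl⟩ := Ideal.Quotient.mk_surjective s
    rw [hspan, ← map_mul, Ideal.mem_quotient_iff_mem_sup, sup_comm] at hs
    rw [hspan, Ideal.mem_quotient_iff_mem_sup, sup_comm]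
    exact mem_yyIdeal_sup_span_X_zero_of_sum_X_succ_mul hn hs
  · have hyy : yyIdeal K n ≤ RingHom.ker (constantCoeff (R := K) (σ := Fin (n + 1))) :=
      Ideal.span_le.mpr <| by rintro _ ⟨i, j, -, rfl⟩; simp
    let ε := Ideal.Quotient.lift (yyIdeal K n) _ hyy
    refine ne_top_of_le_ne_top (RingHom.ker_ne_top ε) (Ideal.span_le.mpr ?_)
    rintro _ (rfl | rfl) <;> exact (Ideal.Quotient.lift_mk _ _ _).trans (by simp)

end yyIdeal

theorem map_lastVarToZero_diamondIdeal (K : Type*) [Field K] (n : ℕ) :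
    (diamondIdeal K n).map (lastVarToZero K (n + 1)) = yyIdeal K n := by
  rw [diamondIdeal, Ideal.map_span, yyIdeal]
  congr 1
  ext f
  simp [xP, yP, zP, -Fin.castSucc_succ, eq_comm]

noncomputable def diamondModZEquiv (K : Type*) [Field K] (n : ℕ) :
    (MvPolynomial (Fin (n + 2)) K ⧸ (diamondIdeal K n + Ideal.span {zP K n})) ≃ₐ[K]
      MvPolynomial (Fin (n + 1)) K ⧸ yyIdeal K n :=
  (quotientSupSpanXLastEquiv (diamondIdeal K n)).trans
    (Ideal.quotientEquivAlgOfEq K (map_lastVarToZero_diamondIdeal K n))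

theorem diamondModZEquiv_mk (K : Type*) [Field K] (n : ℕ) (p : MvPolynomial (Fin (n + 2)) K) :
    diamondModZEquiv K n (Ideal.Quotient.mk _ p) =
      Ideal.Quotient.mk _ (lastVarToZero K (n + 1) p) :=
  rfl

@[simp]
theorem diamondModZEquiv_mk_xP (K : Type*) [Field K] (n : ℕ) :
    diamondModZEquiv K n (Ideal.Quotient.mk _ (xP K n)) = Ideal.Quotient.mk _ (X 0) :=
  congrArg _ (lastVarToZero_X_castSucc 0)

@[simp]
theorem diamondModZEquiv_mk_yP (K : Type*) [Field K] (n : ℕ) (i : Fin n) :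
    diamondModZEquiv K n (Ideal.Quotient.mk _ (yP K n i)) = Ideal.Quotient.mk _ (X i.succ) :=
  congrArg _ (lastVarToZero_X_castSucc i.succ)

@[simp]
theorem diamondModZEquiv_mk_zP (K : Type*) [Field K] (n : ℕ) :
    diamondModZEquiv K n (Ideal.Quotient.mk _ (zP K n)) = 0 := by
  rw [diamondModZEquiv_mk, zP, lastVarToZero_X_last, map_zero]

/-- `S/(I,z) ≅ K[x,y_1,…,y_n]/(y_iy_j : i<j)` as graded `K`-algebras (the isomorphism
sends `x ↦ x`, `y_i ↦ y_i`, `z ↦ 0`), and it is Cohen–Macaulay of Krull dimension `2`. -/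
theorem diamond_mod_z (K : Type*) [Field K] (n : ℕ) (hn : 3 ≤ n) :
    (∃ e : (MvPolynomial (Fin (n + 2)) K ⧸ (diamondIdeal K n + Ideal.span {zP K n})) ≃ₐ[K]
        (MvPolynomial (Fin (n + 1)) K ⧸ yyIdeal K n),
      e (Ideal.Quotient.mk _ (xP K n)) = Ideal.Quotient.mk _ (X 0) ∧
      (∀ i : Fin n, e (Ideal.Quotient.mk _ (yP K n i)) = Ideal.Quotient.mk _ (X i.succ)) ∧
      e (Ideal.Quotient.mk _ (zP K n)) = 0) ∧
    IsCMofDim (diamondIdeal K n + Ideal.span {zP K n}) 2 := by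
  have hn₀ : 0 < n := by omega
  set e := diamondModZEquiv K n
  have he_sum : e (Ideal.Quotient.mk _ (∑ j : Fin n, yP K n j)) =
      Ideal.Quotient.mk _ (∑ j : Fin n, X j.succ) := by
    simp only [map_sum, e, diamondModZEquiv_mk_yP]
  refine ⟨⟨e, diamondModZEquiv_mk_xP K n, diamondModZEquiv_mk_yP K n, diamondModZEquiv_mk_zP K n⟩,
    ?_, ![Ideal.Quotient.mk _ (xP K n), Ideal.Quotient.mk _ (∑ j : Fin n, yP K n j)],
    fun i => ?_, ?_⟩
  · rw [ringKrullDim_eq_of_ringEquiv e.toRingEquiv, ringKrullDim_quotient_yyIdeal hn₀]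
    rfl
  · fin_cases i
    · exact Ideal.mem_map_of_mem _ (Ideal.subset_span ⟨0, rfl⟩)
    · exact Ideal.mem_map_of_mem _ (Ideal.sum_mem _ fun j _ => Ideal.subset_span ⟨_, rfl⟩)
  · convert (isRegSeq_yyIdeal (K := K) hn₀).map_ringEquiv e.symm.toRingEquiv using 1
    ext i
    fin_cases i
    · exact (e.symm_apply_eq.mpr (diamondModZEquiv_mk_xP K n).symm).symm
    · exact (e.symm_apply_eq.mpr he_sum.symm).symm
end

section
/- Let L be a finite lattice and L′ an induced sublattice of L. Then I_L ∩ K[x_a : a ∈ L′] = I_{L′}; that is, the intersection of the join-meet ideal of L with the polynomial subring on the variables indexed by L′ equals the join-meet ideal of L′. -/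
open MvPolynomial

/-- The join-meet ideal `I_L` of a finite lattice `L`, generated by
`x_a x_b − x_{a∧b} x_{a∨b}` for incomparable `a, b ∈ L`. -/
noncomputable def joinMeetIdeal (K : Type*) [Field K] (L : Type*) [Lattice L] :
    Ideal (MvPolynomial L K) :=
  Ideal.span {f | ∃ a b : L, ¬ a ≤ b ∧ ¬ b ≤ a ∧ f = X a * X b - X (a ⊓ b) * X (a ⊔ b)}

/-- The join-meet ideal of a sublattice `L' ⊆ L`, an ideal of `K[x_a : a ∈ L']`. -/
noncomputable def joinMeetIdealSub (K : Type*) [Field K] (L : Type*) [Lattice L] (L' : Set L)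
    (hmeet : ∀ a b : L, a ∈ L' → b ∈ L' → a ⊓ b ∈ L')
    (hjoin : ∀ a b : L, a ∈ L' → b ∈ L' → a ⊔ b ∈ L') :
    Ideal (MvPolynomial L' K) :=
  Ideal.span {f | ∃ a b : L', ¬ (a : L) ≤ b ∧ ¬ (b : L) ≤ a ∧
    f = X a * X b -
      X (⟨(a : L) ⊓ b, hmeet a b a.2 b.2⟩ : L') * X (⟨(a : L) ⊔ b, hjoin a b a.2 b.2⟩ : L')}

/-- If `L'` is an induced sublattice of a finite lattice `L`, then
`I_L ∩ K[x_a : a ∈ L'] = I_{L'}` (the intersection being expressed as the preimage under the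
inclusion `K[x_a : a ∈ L'] ↪ K[x_a : a ∈ L]`, which is induced by renaming variables). -/
theorem joinMeet_contraction_of_induced_sublattice (K : Type*) [Field K]
    (L : Type*) [Lattice L] [Fintype L] (L' : Set L)
    (hmeet : ∀ a b : L, a ∈ L' → b ∈ L' → a ⊓ b ∈ L')
    (hjoin : ∀ a b : L, a ∈ L' → b ∈ L' → a ⊔ b ∈ L')
    (hinduced : ∀ a b : L, a ⊔ b ∈ L' → a ⊓ b ∈ L' → a ∈ L' ∧ b ∈ L') :
    Ideal.comap (rename (Subtype.val : L' → L)).toRingHom (joinMeetIdeal K L) =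
      joinMeetIdealSub K L L' hmeet hjoin := by
  classical
  set π : MvPolynomial L K →ₐ[K] MvPolynomial L' K :=
    aeval (fun c => if h : c ∈ L' then X (⟨c, h⟩ : L') else 0) with hπ
  have hretr : ∀ f : MvPolynomial L' K, π (rename (Subtype.val : L' → L) f) = f := by
    intro f
    rw [hπ, aeval_rename]
    have : ((fun c => if h : c ∈ L' then X (⟨c, h⟩ : L') else 0) ∘ (Subtype.val : L' → L))
        = (X : L' → MvPolynomial L' K) := by
      funext a
      simp [a.2]
    rw [this]
    exact aeval_X_left_apply f
  have hmap : joinMeetIdeal K L ≤ Ideal.comap π.toRingHom (joinMeetIdealSub K L L' hmeet hjoin) := by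
    rw [joinMeetIdeal, Ideal.span_le]
    rintro g ⟨a, b, hab, hba, rfl⟩
    simp only [SetLike.mem_coe, Ideal.mem_comap, AlgHom.toRingHom_eq_coe, RingHom.coe_coe,
      map_sub, map_mul, hπ, aeval_X]
    by_cases ha : a ∈ L'
    · by_cases hb : b ∈ L'
      · rw [dif_pos ha, dif_pos hb, dif_pos (hmeet a b ha hb), dif_pos (hjoin a b ha hb)]
        exact Ideal.subset_span ⟨⟨a, ha⟩, ⟨b, hb⟩, hab, hba, rfl⟩
      · rw [dif_neg hb]
        have : a ⊓ b ∉ L' ∨ a ⊔ b ∉ L' := by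
          by_contra h
          push_neg at h
          exact hb (hinduced a b h.2 h.1).2
        rcases this with h | h
        · rw [dif_neg h]; simp
        · rw [dif_neg h]; simp
    · rw [dif_neg ha]
      have : a ⊓ b ∉ L' ∨ a ⊔ b ∉ L' := by
        by_contra h
        push_neg at h
        exact ha (hinduced a b h.2 h.1).1
      rcases this with h | h
      · rw [dif_neg h]; simp
      · rw [dif_neg h]; simp
  apply le_antisymm
  · intro f hf
    have : π ((rename (Subtype.val : L' → L)) f) ∈ joinMeetIdealSub K L L' hmeet hjoin :=
      hmap hf
    rwa [hretr f] at this
  · rw [joinMeetIdealSub, Ideal.span_le]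
    rintro g ⟨a, b, hab, hba, rfl⟩
    simp only [SetLike.mem_coe, Ideal.mem_comap, AlgHom.toRingHom_eq_coe, RingHom.coe_coe,
      map_sub, map_mul, rename_X]
    exact Ideal.subset_span ⟨a, b, hab, hba, rfl⟩
end
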